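/- Monad from a substitution system: if (T,α) is an (Id + H)-algebra forming a heterogeneous substitution system for (H,θ), with induced point η : Id → T and bracket ⦃−⦄, then (T, η, μ) is a monad on C, where μ := ⦃id_{(T,η)}⦄ : T·T → T is the bracket of the identity pointed morphism on (T,η). -/

import Mathlib

/-!
Each monad law is an instance of the uniqueness of brackets: both sides satisfy the two
substitution equations for one and the same pointed morphism. The left unit law and one side
of associativity are instances of fusion, `⦃f⦄ ∘ T·g = ⦃f ∘ g⦄` for a pointed morphism
`g : Z ⟶ Z'`, which rests on the naturality of `θ` in its pointed argument. The other side of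
associativity is an instance of `⦃f⦄ ∘ ⦃f'⦄·Z = ⦃⦃f⦄ ∘ f'·Z⦄` over the composite pointed
endofunctor `Z'·Z`, which rests on the naturality of `θ` in `X` and on its composition law.
-/

open CategoryTheory Limits

universe v u

/-- A pointed endofunctor on `C`. -/
structure Ptd (C : Type u) [Category.{v} C] where
  Z : C ⥤ C
  e : 𝟭 C ⟶ Z

/-- A *signature* over `C`: an endofunctor `H` on the endofunctor category `[C,C]`
together with a strength `θ : (H −)·U∼ ⟶ H (−·U∼)`, natural in both variables and
satisfying the unit and composition coherence laws (here `X·Z` is the composite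
`Z ⋙ X`, i.e. `A ↦ X (Z A)`). -/
structure Signature (C : Type u) [Category.{v} C] where
  H : (C ⥤ C) ⥤ (C ⥤ C)
  θ : ∀ (X : C ⥤ C) (Z : Ptd C), (Z.Z ⋙ H.obj X) ⟶ H.obj (Z.Z ⋙ X)
  θ_nat_X : ∀ {X X' : C ⥤ C} (α : X ⟶ X') (Z : Ptd C),
      Functor.whiskerLeft Z.Z (H.map α) ≫ θ X' Z = θ X Z ≫ H.map (Functor.whiskerLeft Z.Z α)
  θ_nat_Z : ∀ (X : C ⥤ C) {Z Z' : Ptd C} (g : Z.Z ⟶ Z'.Z), Z.e ≫ g = Z'.e →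
      Functor.whiskerRight g (H.obj X) ≫ θ X Z' = θ X Z ≫ H.map (Functor.whiskerRight g X)
  θ_id : ∀ X : C ⥤ C,
      θ X ⟨𝟭 C, 𝟙 (𝟭 C)⟩ =
        (Functor.leftUnitor (H.obj X)).hom ≫ H.map (Functor.leftUnitor X).inv
  θ_comp : ∀ (X : C ⥤ C) (Z Z' : Ptd C),
      θ X ⟨Z.Z ⋙ Z'.Z, Z.e ≫ Functor.whiskerLeft Z.Z Z'.e⟩ =
        (Functor.associator Z.Z Z'.Z (H.obj X)).hom ≫
          Functor.whiskerLeft Z.Z (θ X Z') ≫ θ (Z'.Z ⋙ X) Z ≫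
          H.map (Functor.associator Z.Z Z'.Z X).inv

variable {C : Type u} [Category.{v} C]

/-- A *heterogeneous substitution system* for a signature `(H, θ)`:
an `(Id + H)`-algebra, presented by its components `η : Id ⟶ T` and `τ : H T ⟶ T`,
together with, for every morphism of pointed endofunctors `f : (Z,e) ⟶ (T,η)`,
a unique bracket `⦃f⦄ : T·Z ⟶ T` satisfying the two substitution equations. -/
structure HSS (S : Signature C) where
  T : C ⥤ C
  η : 𝟭 C ⟶ T
  τ : S.H.obj T ⟶ T
  bracket : ∀ (Z : Ptd C) (f : Z.Z ⟶ T), Z.e ≫ f = η → (Z.Z ⋙ T ⟶ T)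
  bracket_η : ∀ (Z : Ptd C) (f : Z.Z ⟶ T) (hf : Z.e ≫ f = η),
      Functor.whiskerLeft Z.Z η ≫ bracket Z f hf = f
  bracket_τ : ∀ (Z : Ptd C) (f : Z.Z ⟶ T) (hf : Z.e ≫ f = η),
      Functor.whiskerLeft Z.Z τ ≫ bracket Z f hf = S.θ T Z ≫ S.H.map (bracket Z f hf) ≫ τ
  bracket_unique : ∀ (Z : Ptd C) (f : Z.Z ⟶ T) (hf : Z.e ≫ f = η)
      (h : Z.Z ⋙ T ⟶ T),
      Functor.whiskerLeft Z.Z η ≫ h = f →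
      Functor.whiskerLeft Z.Z τ ≫ h = S.θ T Z ≫ S.H.map h ≫ τ →
      h = bracket Z f hf

namespace HSS

variable {S : Signature C} (hss : HSS S)

theorem bracket_congr {Z : Ptd C} {f f' : Z.Z ⟶ hss.T} (h : f = f') (hf : Z.e ≫ f = hss.η) :
    hss.bracket Z f hf = hss.bracket Z f' (h ▸ hf) := by
  subst h; rfl

theorem bracket_idPtd :
    hss.bracket ⟨𝟭 C, 𝟙 (𝟭 C)⟩ hss.η (Category.id_comp _) = (Functor.leftUnitor hss.T).hom := by
  refine (hss.bracket_unique ⟨𝟭 C, 𝟙 (𝟭 C)⟩ _ _ _ (by ext; simp) ?_).symm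
  rw [S.θ_id, Category.assoc, ← Functor.map_comp_assoc, Iso.inv_hom_id,
    CategoryTheory.Functor.map_id, Category.id_comp]
  ext
  simp

theorem whiskerRight_comp_bracket {Z Z' : Ptd C} (g : Z.Z ⟶ Z'.Z) (hg : Z.e ≫ g = Z'.e)
    (f : Z'.Z ⟶ hss.T) (hf : Z'.e ≫ f = hss.η) :
    Functor.whiskerRight g hss.T ≫ hss.bracket Z' f hf =
      hss.bracket Z (g ≫ f) (by rw [← Category.assoc, hg, hf]) := by
  refine hss.bracket_unique Z _ _ _ ?_ ?_
  · rw [Functor.whiskerLeft_comp_whiskerRight_assoc, hss.bracket_η]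
    rfl
  · rw [Functor.whiskerLeft_comp_whiskerRight_assoc, hss.bracket_τ,
      ← Category.assoc, S.θ_nat_Z _ g hg, Category.assoc, Functor.map_comp_assoc]

theorem whiskerLeft_bracket_comp_bracket {Z Z' : Ptd C} (f : Z.Z ⟶ hss.T) (hf : Z.e ≫ f = hss.η)
    (f' : Z'.Z ⟶ hss.T) (hf' : Z'.e ≫ f' = hss.η) :
    (Functor.whiskerLeft Z.Z (hss.bracket Z' f' hf') ≫ hss.bracket Z f hf :
        (Z.Z ⋙ Z'.Z) ⋙ hss.T ⟶ hss.T) =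
      hss.bracket ⟨Z.Z ⋙ Z'.Z, Z.e ≫ Functor.whiskerLeft Z.Z Z'.e⟩
        (Functor.whiskerLeft Z.Z f' ≫ hss.bracket Z f hf)
        (by rw [Category.assoc, ← Functor.whiskerLeft_comp_assoc, hf', hss.bracket_η, hf]) := by
  refine hss.bracket_unique ⟨Z.Z ⋙ Z'.Z, Z.e ≫ Functor.whiskerLeft Z.Z Z'.e⟩ _ _ _ ?_ ?_
  · change Functor.whiskerLeft Z.Z (Functor.whiskerLeft Z'.Z hss.η) ≫ _ = _
    rw [← Functor.whiskerLeft_comp_assoc, hss.bracket_η]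
  · have hθ := S.θ_nat_X (hss.bracket Z' f' hf') Z
    have hα : (Functor.associator Z.Z Z'.Z (S.H.obj hss.T)).hom = 𝟙 _ := rfl
    have hα' : S.H.map (Functor.associator Z.Z Z'.Z hss.T).inv = 𝟙 _ := S.H.map_id _
    change Functor.whiskerLeft Z.Z (Functor.whiskerLeft Z'.Z hss.τ) ≫ _ = _
    rw [← Functor.whiskerLeft_comp_assoc, hss.bracket_τ, Functor.whiskerLeft_comp,
      Functor.whiskerLeft_comp, Category.assoc, Category.assoc, hss.bracket_τ,
      reassoc_of% hθ, S.θ_comp, hα, hα', Functor.map_comp]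
    simp only [Category.id_comp, Category.assoc]

def mu : hss.T ⋙ hss.T ⟶ hss.T :=
  hss.bracket ⟨hss.T, hss.η⟩ (𝟙 hss.T) (Category.comp_id hss.η)

theorem mu_right_unit : Functor.whiskerLeft hss.T hss.η ≫ hss.mu = 𝟙 hss.T :=
  hss.bracket_η ⟨hss.T, hss.η⟩ _ _

theorem mu_left_unit : Functor.whiskerRight hss.η hss.T ≫ hss.mu = 𝟙 hss.T :=
  calc Functor.whiskerRight hss.η hss.T ≫ hss.mu
      = hss.bracket ⟨𝟭 C, 𝟙 (𝟭 C)⟩ (hss.η ≫ 𝟙 hss.T) _ :=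
        hss.whiskerRight_comp_bracket (Z := ⟨𝟭 C, 𝟙 (𝟭 C)⟩) (Z' := ⟨hss.T, hss.η⟩) hss.η
          (Category.id_comp _) _ _
    _ = (Functor.leftUnitor hss.T).hom :=
        (hss.bracket_congr (Category.comp_id _) _).trans hss.bracket_idPtd
    _ = 𝟙 hss.T := rfl

theorem mu_assoc :
    Functor.whiskerRight hss.mu hss.T ≫ hss.mu = Functor.whiskerLeft hss.T hss.mu ≫ hss.mu := by
  have hμ : (hss.η ≫ Functor.whiskerLeft hss.T hss.η) ≫ hss.mu = hss.η := by
    rw [Category.assoc, mu_right_unit, Category.comp_id]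
  calc Functor.whiskerRight hss.mu hss.T ≫ hss.mu
      = hss.bracket ⟨hss.T ⋙ hss.T, hss.η ≫ Functor.whiskerLeft hss.T hss.η⟩ hss.mu hμ :=
        (hss.whiskerRight_comp_bracket
          (Z := ⟨hss.T ⋙ hss.T, hss.η ≫ Functor.whiskerLeft hss.T hss.η⟩) (Z' := ⟨hss.T, hss.η⟩)
          hss.mu hμ _ _).trans
          (hss.bracket_congr (Category.comp_id _) _)
    _ = Functor.whiskerLeft hss.T hss.mu ≫ hss.mu :=
        ((hss.bracket_congr (by simp [mu]) _).trans
          (hss.whiskerLeft_bracket_comp_bracket (Z := ⟨hss.T, hss.η⟩) (Z' := ⟨hss.T, hss.η⟩)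
            (𝟙 hss.T) (Category.comp_id _) (𝟙 hss.T) (Category.comp_id _)).symm)

end HSS

/-- **Monad from a substitution system** (Matthes–Uustalu, Thm. 10): if `(T,α)` is an
`(Id + H)`-algebra forming a heterogeneous substitution system for `(H,θ)`, with point
`η : Id ⟶ T` and bracket `⦃−⦄`, then `(T, η, μ)` with `μ := ⦃id_{(T,η)}⦄ : T·T ⟶ T`
is a monad on `C`: the two unit laws and the associativity law hold. -/
theorem monad_from_hss (S : Signature C) (hss : HSS S)
    (μ : hss.T ⋙ hss.T ⟶ hss.T)
    (hμ : μ = hss.bracket ⟨hss.T, hss.η⟩ (𝟙 hss.T) (Category.comp_id hss.η)) :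
    -- right unit law `μ ∘ η T = id`
    (Functor.whiskerLeft hss.T hss.η ≫ μ = 𝟙 hss.T) ∧
    -- left unit law `μ ∘ T η = id`
    (Functor.whiskerRight hss.η hss.T ≫ μ = 𝟙 hss.T) ∧
    -- associativity `μ ∘ μ T = μ ∘ T μ`
    (Functor.whiskerRight μ hss.T ≫ μ = Functor.whiskerLeft hss.T μ ≫ μ) := by
  subst hμ
  exact ⟨hss.mu_right_unit, hss.mu_left_unit, hss.mu_assoc⟩
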